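/- arXiv:1406.2550 — 2 statements merged into one kernel-verified Lean document; each statement's English description precedes it below -/
import Mathlib

section
/- Let G = ⟨a, b | a^{b²} = a·a^{3b}⟩ and let N be the normal closure of [a, a^b] in G. Then the quotient G/N is isomorphic to the semidirect product ℤ² ⋊ ℤ in which the generator of ℤ acts on ℤ² by the matrix U = !![0,1;1,3]; equivalently, the two-relator group ⟨a, b | a^{b²} = a·a^{3b}, [a, a^b] = 1⟩ is isomorphic to ℤ² ⋊_U ℤ. -/
namespace OneRelatorLCS

/-- The relator `(b⁻²ab²)⁻¹ · a · (b⁻¹a³b)` in the free group on `a = of 0`, `b = of 1`,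
expressing the relation `a^{b²} = a·a^{3b}` (with `x^y = y⁻¹xy`). -/
def rel : FreeGroup (Fin 2) :=
  ((FreeGroup.of 1)⁻¹ * (FreeGroup.of 1)⁻¹ * FreeGroup.of 0 * FreeGroup.of 1 * FreeGroup.of 1)⁻¹ *
    FreeGroup.of 0 *
    ((FreeGroup.of 1)⁻¹ * (FreeGroup.of 0) ^ 3 * FreeGroup.of 1)

/-- The one-relator group `G = ⟨a, b | a^{b²} = a·a^{3b}⟩`. -/
abbrev G : Type := PresentedGroup ({rel} : Set (FreeGroup (Fin 2)))

def a : G := PresentedGroup.of 0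
def b : G := PresentedGroup.of 1

/-- `[x,y] = x⁻¹y⁻¹xy`. -/
def cmt {H : Type*} [Group H] (x y : H) : H := x⁻¹ * y⁻¹ * x * y

/-- The matrix `U = !![0,1;1,3] ∈ GL₂(ℤ)`. -/
def U : Matrix (Fin 2) (Fin 2) ℤ := !![0, 1; 1, 3]

/-- The automorphism of `ℤ²` given by the matrix `U` (its inverse is given by
`U⁻¹ = !![-3,1;1,0]`, since `det U = -1`). -/
def Uaut : (Fin 2 → ℤ) ≃+ (Fin 2 → ℤ) where
  toFun v := U.mulVec v
  invFun v := (!![-3, 1; 1, 0] : Matrix (Fin 2) (Fin 2) ℤ).mulVec v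
  left_inv v := by
    show (!![-3, 1; 1, 0] : Matrix (Fin 2) (Fin 2) ℤ).mulVec (U.mulVec v) = v
    rw [Matrix.mulVec_mulVec,
      show (!![-3, 1; 1, 0] : Matrix (Fin 2) (Fin 2) ℤ) * U = 1 by decide,
      Matrix.one_mulVec]
  right_inv v := by
    show U.mulVec ((!![-3, 1; 1, 0] : Matrix (Fin 2) (Fin 2) ℤ).mulVec v) = v
    rw [Matrix.mulVec_mulVec,
      show U * (!![-3, 1; 1, 0] : Matrix (Fin 2) (Fin 2) ℤ) = 1 by decide,
      Matrix.one_mulVec]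
  map_add' v w := Matrix.mulVec_add U v w

/-- The action of `ℤ` on `ℤ²` in which `1 ∈ ℤ` acts by the matrix `U`. -/
def phi : Multiplicative ℤ →* MulAut (Multiplicative (Fin 2 → ℤ)) :=
  zpowersHom _ (AddEquiv.toMultiplicative Uaut)

/-- The semidirect product `ℤ² ⋊_U ℤ` where the generator of `ℤ` acts by `U`. -/
abbrev ZUZ : Type := SemidirectProduct (Multiplicative (Fin 2 → ℤ)) (Multiplicative ℤ) phi

/-!
Sending `a ↦ e₀` and `b ↦ -1 ∈ ℤ` respects the defining relation: conjugation by `b` then acts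
on `(a, a^b)` as `U` does on `(e₀, e₁)`, and `a^{b²} = a·a^{3b}` becomes the Cayley–Hamilton
identity `U² = 3U + 1` applied to `e₀`; it kills `[a, a^b]` because `ℤ²` is abelian.
Conversely, in `G ⧸ N` the elements `a` and `a^b` commute, so `v ↦ a^{v₀} (a^b)^{v₁}` is a
homomorphism from `ℤ²`, and the defining relation says exactly that conjugation by `b` transforms
it by `U`. With `1 ↦ b⁻¹` this extends to `ℤ² ⋊_U ℤ`, and the two maps are mutually inverse on
generators.
-/

open SemidirectProduct Multiplicative
open scoped Matrix

section General

variable {H : Type*} [Group H]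

theorem cmt_eq_one_iff_commute {x y : H} : cmt x y = 1 ↔ Commute x y := by
  rw [← Commute.inv_inv_iff, ← commutatorElement_eq_one_iff_commute, commutatorElement_def,
    inv_inv, inv_inv]
  rfl

theorem map_cmt {K : Type*} [Group K] (f : H →* K) (x y : H) : f (cmt x y) = cmt (f x) (f y) := by
  simp only [cmt, map_mul, map_inv]

theorem map_rel_eq_one_iff (φ : FreeGroup (Fin 2) →* H) :
    φ rel = 1 ↔
      (φ (.of 1))⁻¹ * ((φ (.of 1))⁻¹ * φ (.of 0) * φ (.of 1)) * φ (.of 1) =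
        φ (.of 0) * ((φ (.of 1))⁻¹ * φ (.of 0) * φ (.of 1)) ^ 3 := by
  have conj_cube : ((φ (.of 1))⁻¹ * φ (.of 0) * φ (.of 1)) ^ 3 =
      (φ (.of 1))⁻¹ * φ (.of 0) ^ 3 * φ (.of 1) := by
    simp only [pow_succ, pow_zero, one_mul]
    group
  simp only [rel, map_mul, map_inv, map_pow]
  rw [conj_cube, mul_assoc _ (φ (.of 0)), inv_mul_eq_one]
  simp only [mul_assoc]

def zpowersHom₂ {x y : H} (hxy : Commute x y) : Multiplicative (Fin 2 → ℤ) →* H where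
  toFun v := x ^ v.toAdd 0 * y ^ v.toAdd 1
  map_one' := by simp
  map_mul' v w := by
    simp only [toAdd_mul, Pi.add_apply, zpow_add]
    exact (hxy.zpow_zpow _ _).mul_mul_mul_comm _ _

theorem zpowersHom₂_apply {x y : H} (hxy : Commute x y) (v : Fin 2 → ℤ) :
    zpowersHom₂ hxy (ofAdd v) = x ^ v 0 * y ^ v 1 := rfl

theorem map_ofAdd_fin_two (f : Multiplicative (Fin 2 → ℤ) →* H) (v : Fin 2 → ℤ) :
    f (ofAdd v) = f (ofAdd ![1, 0]) ^ v 0 * f (ofAdd ![0, 1]) ^ v 1 := by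
  have basis_expansion : ofAdd v = ofAdd ![1, 0] ^ v 0 * ofAdd ![0, 1] ^ v 1 := by
    rw [← ofAdd_zsmul, ← ofAdd_zsmul, ← ofAdd_add]
    congr 1
    ext i
    fin_cases i <;> simp
  rw [basis_expansion, map_mul, map_zpow, map_zpow]

theorem hom_ext_fin_two {f g : Multiplicative (Fin 2 → ℤ) →* H}
    (h₀ : f (ofAdd ![1, 0]) = g (ofAdd ![1, 0])) (h₁ : f (ofAdd ![0, 1]) = g (ofAdd ![0, 1])) :
    f = g :=
  MonoidHom.ext fun v => by rw [← ofAdd_toAdd v, map_ofAdd_fin_two f, map_ofAdd_fin_two g, h₀, h₁]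

variable {K : Type*} [Group K] {e : MulAut K} {f : K →* H} {h : H}

theorem map_zpow_apply_eq_conj (hf : f.comp e.toMonoidHom = (MulAut.conj h).toMonoidHom.comp f)
    (k : ℤ) (n : K) : f ((e ^ k) n) = h ^ k * f n * (h ^ k)⁻¹ := by
  have step (n : K) : f (e n) = h * f n * h⁻¹ := DFunLike.congr_fun hf n
  induction k using Int.induction_on generalizing n with
  | zero => simp
  | succ k ih =>
    rw [zpow_add_one, MulAut.mul_apply, ih, step]
    group
  | pred k ih =>
    have step_inv : f (e⁻¹ n) = h⁻¹ * f n * h := by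
      have := step (e⁻¹ n)
      rw [MulAut.apply_inv_self] at this
      rw [this]
      group
    rw [zpow_sub_one, MulAut.mul_apply, ih, step_inv]
    group

def liftZ (hf : f.comp e.toMonoidHom = (MulAut.conj h).toMonoidHom.comp f) :
    K ⋊[zpowersHom _ e] Multiplicative ℤ →* H :=
  SemidirectProduct.lift f (zpowersHom H h) fun g =>
    MonoidHom.ext fun n => map_zpow_apply_eq_conj hf g.toAdd n

theorem liftZ_inl (hf : f.comp e.toMonoidHom = (MulAut.conj h).toMonoidHom.comp f) (n : K) :
    liftZ hf (inl n) = f n :=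
  lift_inl _ _ _ _

theorem liftZ_inr (hf : f.comp e.toMonoidHom = (MulAut.conj h).toMonoidHom.comp f)
    (k : Multiplicative ℤ) : liftZ hf (inr k) = h ^ k.toAdd :=
  lift_inr _ _ _ _

end General

theorem defining_relation : b⁻¹ * (b⁻¹ * a * b) * b = a * (b⁻¹ * a * b) ^ 3 :=
  (map_rel_eq_one_iff (PresentedGroup.mk _)).1 (PresentedGroup.one_of_mem rfl)

theorem U_mulVec_e₀ : U *ᵥ ![1, 0] = ![0, 1] := by decide

theorem U_mulVec_e₁ : U *ᵥ ![0, 1] = ![1, 3] := by decide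

theorem inr_conj_inl (v : Fin 2 → ℤ) :
    (inr (ofAdd (-1)) : ZUZ)⁻¹ * inl (ofAdd v) * inr (ofAdd (-1)) = inl (ofAdd (U *ᵥ v)) := by
  rw [← map_inv inr (ofAdd (-1)), ← inl_aut_inv]
  rfl

def toZUZ : G →* ZUZ :=
  PresentedGroup.toGroup (f := ![inl (ofAdd ![1, 0]), inr (ofAdd (-1))]) <| by
    rintro r rfl
    rw [map_rel_eq_one_iff]
    simp only [FreeGroup.lift_apply_of, Matrix.cons_val_zero, Matrix.cons_val_one]
    rw [inr_conj_inl, inr_conj_inl, U_mulVec_e₀, U_mulVec_e₁, ← map_pow, ← map_mul, ← ofAdd_nsmul,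
      ← ofAdd_add]
    -- `U² e₀ = e₀ + 3 U e₀`, Cayley–Hamilton for `U`
    congr 2
    decide

theorem toZUZ_a : toZUZ a = inl (ofAdd ![1, 0]) := PresentedGroup.toGroup.of _

theorem toZUZ_b : toZUZ b = inr (ofAdd (-1)) := PresentedGroup.toGroup.of _

theorem toZUZ_conj_a : toZUZ (b⁻¹ * a * b) = inl (ofAdd ![0, 1]) := by
  rw [map_mul, map_mul, map_inv, toZUZ_a, toZUZ_b, inr_conj_inl, U_mulVec_e₀]

abbrev N : Subgroup G := Subgroup.normalClosure {cmt a (b⁻¹ * a * b)}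

theorem N_le_ker_toZUZ : N ≤ toZUZ.ker := by
  refine Subgroup.normalClosure_le_normal (Set.singleton_subset_iff.2 ?_)
  have images_commute : Commute (toZUZ a) (toZUZ (b⁻¹ * a * b)) := by
    rw [toZUZ_a, toZUZ_conj_a]
    exact (Commute.all _ _).map inl
  exact MonoidHom.mem_ker.2 ((map_cmt _ _ _).trans (cmt_eq_one_iff_commute.2 images_commute))

def quotToZUZ : G ⧸ N →* ZUZ := QuotientGroup.lift N toZUZ N_le_ker_toZUZ

def aQ : G ⧸ N := a

def bQ : G ⧸ N := b

theorem quotToZUZ_aQ : quotToZUZ aQ = toZUZ a := rfl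

theorem quotToZUZ_bQ : quotToZUZ bQ = toZUZ b := rfl

theorem commute_aQ_conj : Commute aQ (bQ⁻¹ * aQ * bQ) :=
  cmt_eq_one_iff_commute.1 <| (QuotientGroup.eq_one_iff _).2 <| Subgroup.subset_normalClosure rfl

theorem defining_relation_quot : bQ⁻¹ * (bQ⁻¹ * aQ * bQ) * bQ = aQ * (bQ⁻¹ * aQ * bQ) ^ 3 :=
  congrArg (QuotientGroup.mk' N) defining_relation

theorem zpowersHom₂_comp_Uaut :
    (zpowersHom₂ commute_aQ_conj).comp (AddEquiv.toMultiplicative Uaut).toMonoidHom =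
      (MulAut.conj bQ⁻¹).toMonoidHom.comp (zpowersHom₂ commute_aQ_conj) := by
  refine hom_ext_fin_two ?_ ?_
  · show zpowersHom₂ commute_aQ_conj (ofAdd (U *ᵥ ![1, 0])) = _
    rw [U_mulVec_e₀]
    simp [zpowersHom₂_apply]
  · show zpowersHom₂ commute_aQ_conj (ofAdd (U *ᵥ ![0, 1])) = _
    rw [U_mulVec_e₁]
    simpa [zpowersHom₂_apply] using defining_relation_quot.symm

def fromZUZ : ZUZ →* G ⧸ N := liftZ zpowersHom₂_comp_Uaut

theorem fromZUZ_inl (v : Multiplicative (Fin 2 → ℤ)) :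
    fromZUZ (inl v) = zpowersHom₂ commute_aQ_conj v :=
  liftZ_inl _ _

theorem fromZUZ_inr (k : Multiplicative ℤ) : fromZUZ (inr k) = bQ⁻¹ ^ k.toAdd :=
  liftZ_inr _ _

theorem fromZUZ_comp_quotToZUZ : fromZUZ.comp quotToZUZ = MonoidHom.id _ := by
  refine QuotientGroup.monoidHom_ext _ (PresentedGroup.ext fun i => ?_)
  fin_cases i
  · show fromZUZ (toZUZ a) = aQ
    rw [toZUZ_a, fromZUZ_inl, zpowersHom₂_apply]
    simp
  · show fromZUZ (toZUZ b) = bQ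
    rw [toZUZ_b, fromZUZ_inr]
    simp

theorem quotToZUZ_comp_fromZUZ : quotToZUZ.comp fromZUZ = MonoidHom.id _ := by
  refine SemidirectProduct.hom_ext (hom_ext_fin_two ?_ ?_) (MonoidHom.ext_mint ?_)
  · show quotToZUZ (fromZUZ (inl (ofAdd ![1, 0]))) = inl (ofAdd ![1, 0])
    rw [fromZUZ_inl, zpowersHom₂_apply]
    simpa [quotToZUZ_aQ] using toZUZ_a
  · show quotToZUZ (fromZUZ (inl (ofAdd ![0, 1]))) = inl (ofAdd ![0, 1])
    rw [fromZUZ_inl, zpowersHom₂_apply]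
    simpa [quotToZUZ_aQ, quotToZUZ_bQ] using toZUZ_conj_a
  · show quotToZUZ (fromZUZ (inr (ofAdd 1))) = inr (ofAdd 1)
    rw [fromZUZ_inr]
    simp [quotToZUZ_bQ, toZUZ_b]

/-- The quotient of `G = ⟨a, b | a^{b²} = a·a^{3b}⟩` by the normal closure of
`[a, a^b]` is isomorphic to the semidirect product `ℤ² ⋊_U ℤ`,
`U = !![0,1;1,3]`; equivalently, the two-relator group
`⟨a, b | a^{b²} = a·a^{3b}, [a, a^b] = 1⟩` is isomorphic to `ℤ² ⋊_U ℤ`. -/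
theorem quotient_iso_semidirect :
    Nonempty ((G ⧸ Subgroup.normalClosure {cmt a (b⁻¹ * a * b)}) ≃* ZUZ) :=
  ⟨quotToZUZ.toMulEquiv fromZUZ fromZUZ_comp_quotToZUZ quotToZUZ_comp_fromZUZ⟩

end OneRelatorLCS
end

section
/- Let α₁ = (3+√13)/2 and α₂ = (3−√13)/2. For every integer s ≥ 1, the real number (α₁^s + 1)(α₂^s + 1) is an integer with absolute value greater than 1; moreover it is divisible by 3 when s is odd, and when s is even both factors α₁^s + 1 and α₂^s + 1 are greater than 1. -/
/-!
`α₁` and `α₂` are the roots of `X² - 3X - 1`, so `α₁ + α₂ = 3` and `α₁α₂ = -1`. Hence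
`(α₁^s + 1)(α₂^s + 1) = (-1)^s + V s + 1`, where `V s = α₁^s + α₂^s` is the Lucas sequence
`V 0 = 2`, `V 1 = 3`, `V (n+2) = 3 V (n+1) + V n`. This sequence is integral, at least `2`,
and divisible by `3` at odd indices. For even `s` both factors exceed `1` because
`α₁^s, α₂^s > 0`.
-/

/-- The Lucas sequence `V(P, Q)` with `Q = -1`. -/
def lucasV (P : ℤ) : ℕ → ℤ
  | 0 => 2
  | 1 => P
  | n + 2 => P * lucasV P (n + 1) + lucasV P n

theorem two_le_lucasV {P : ℤ} (hP : 2 ≤ P) : ∀ n, 2 ≤ lucasV P n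
  | 0 => le_rfl
  | 1 => hP
  | n + 2 => by
    have h₁ := two_le_lucasV hP (n + 1)
    have h₀ := two_le_lucasV hP n
    simp only [lucasV]
    nlinarith

theorem dvd_lucasV_of_odd (P : ℤ) : ∀ n, Odd n → P ∣ lucasV P n
  | 0, h => absurd h Nat.not_odd_zero
  | 1, _ => dvd_rfl
  | n + 2, h =>
    (dvd_mul_right P _).add (dvd_lucasV_of_odd P n (by simpa [Nat.odd_add] using h))

theorem pow_add_pow_eq_lucasV {R : Type*} [CommRing R] {P : ℤ} {x y : R}
    (hsum : x + y = P) (hprod : x * y = -1) : ∀ n, x ^ n + y ^ n = lucasV P n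
  | 0 => by norm_num [lucasV]
  | 1 => by simpa [lucasV] using hsum
  | n + 2 => by
    have h₁ := pow_add_pow_eq_lucasV hsum hprod (n + 1)
    have h₀ := pow_add_pow_eq_lucasV hsum hprod n
    have key : x ^ (n + 2) + y ^ (n + 2)
        = (x + y) * (x ^ (n + 1) + y ^ (n + 1)) - x * y * (x ^ n + y ^ n) := by ring
    rw [key, hsum, hprod, h₁, h₀, lucasV]
    push_cast
    ring

theorem norm_of_power_add_one_general
    (α₁ α₂ : ℝ) (h₁ : α₁ = (3 + Real.sqrt 13) / 2) (h₂ : α₂ = (3 - Real.sqrt 13) / 2)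
    (s : ℕ) :
    (∃ m : ℤ, (α₁ ^ s + 1) * (α₂ ^ s + 1) = (m : ℝ) ∧ 1 < |m| ∧ (Odd s → (3 : ℤ) ∣ m)) ∧
      (Even s → 1 < α₁ ^ s + 1 ∧ 1 < α₂ ^ s + 1) := by
  have hsum : α₁ + α₂ = (3 : ℤ) := by rw [h₁, h₂]; push_cast; ring
  have hprod : α₁ * α₂ = -1 := by
    rw [h₁, h₂]
    linear_combination (-1 / 4 : ℝ) * Real.sq_sqrt (show (0 : ℝ) ≤ 13 by norm_num)
  have hV := pow_add_pow_eq_lucasV hsum hprod s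
  have hV₂ := two_le_lucasV (P := 3) (by norm_num) s
  refine ⟨⟨(-1) ^ s + lucasV 3 s + 1, ?_, ?_, fun hs => ?_⟩, fun hs => ?_⟩
  · push_cast
    rw [← hV, ← hprod]
    ring
  · rcases neg_one_pow_eq_or ℤ s with h | h <;> rw [h, abs_of_pos] <;> omega
  · simpa [hs.neg_one_pow] using dvd_lucasV_of_odd 3 s hs
  · have hα₁ : α₁ ≠ 0 := by rintro rfl; simp at hprod
    have hα₂ : α₂ ≠ 0 := by rintro rfl; simp at hprod
    exact ⟨by linarith [hs.pow_pos hα₁], by linarith [hs.pow_pos hα₂]⟩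

/-- Let `α₁ = (3+√13)/2` and `α₂ = (3−√13)/2`.  For every integer `s ≥ 1`, the
real number `(α₁^s + 1)(α₂^s + 1)` is an integer of absolute value greater
than `1`; it is divisible by `3` when `s` is odd, and when `s` is even both
factors `α₁^s + 1` and `α₂^s + 1` are greater than `1`. -/
theorem norm_of_power_add_one
    (α₁ α₂ : ℝ) (h₁ : α₁ = (3 + Real.sqrt 13) / 2) (h₂ : α₂ = (3 - Real.sqrt 13) / 2)
    (s : ℕ) (hs : 1 ≤ s) :
    (∃ m : ℤ, (α₁ ^ s + 1) * (α₂ ^ s + 1) = (m : ℝ) ∧ 1 < |m| ∧ (Odd s → (3 : ℤ) ∣ m)) ∧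
      (Even s → 1 < α₁ ^ s + 1 ∧ 1 < α₂ ^ s + 1) :=
  norm_of_power_add_one_general α₁ α₂ h₁ h₂ s
end
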